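/- arXiv:1605.04555 — 6 statements merged into one kernel-verified Lean document; each statement's English description precedes it below -/
import Mathlib

section
/- For a multiplicative n-Hom Lie superalgebra N, QDer(N) + QC(N) ⊆ GDer(N): the sum of a homogeneous α^k-quasiderivation of degree ξ and a homogeneous α^k-quasicentroid element of degree ξ is a homogeneous generalized α^k-derivation of degree ξ. -/
open scoped BigOperators

noncomputable section

variable {𝔽 : Type*} [Field 𝔽]
variable {N : Type*} [AddCommGroup N] [Module 𝔽 N]

/-- The sign `(-1)^g` for `g : ZMod 2`. -/
def sgn (𝔽 : Type*) [Field 𝔽] (g : ZMod 2) : 𝔽 := if g = 0 then 1 else -1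

/-- `|X_{i-1}|` : the sum of the degrees `d j` for `j < i`. -/
def psum {m : ℕ} (d : Fin m → ZMod 2) (i : Fin m) : ZMod 2 :=
  ∑ j ∈ Finset.univ.filter (fun j => j < i), d j

/-- `D` is homogeneous of degree `ξ` with respect to the `ℤ₂`-grading `gr`. -/
def Homog (gr : ZMod 2 → Submodule 𝔽 N) (ξ : ZMod 2) (D : N →ₗ[𝔽] N) : Prop :=
  ∀ g : ZMod 2, ∀ x ∈ gr g, D x ∈ gr (g + ξ)

/-- `(N, br, α)` is a multiplicative `n`-Hom Lie superalgebra, where `n = m + 1`: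
`N = N₀ ⊕ N₁` is `ℤ₂`-graded, the `n`-multilinear bracket `br` is even (adds degrees),
super skew-symmetric in adjacent arguments, `α` is even, multiplicative, and the super
Hom-Jacobi identity holds. -/
structure IsMNHLS {m : ℕ} (gr : ZMod 2 → Submodule 𝔽 N)
    (br : MultilinearMap 𝔽 (fun _ : Fin (m + 1) => N) N) (α : N →ₗ[𝔽] N) : Prop where
  internal : DirectSum.IsInternal gr
  alpha_even : ∀ g : ZMod 2, ∀ x ∈ gr g, α x ∈ gr g
  br_deg : ∀ (d : Fin (m + 1) → ZMod 2) (x : Fin (m + 1) → N),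
      (∀ i, x i ∈ gr (d i)) → br x ∈ gr (∑ i, d i)
  skew : ∀ (d : Fin (m + 1) → ZMod 2) (x : Fin (m + 1) → N),
      (∀ i, x i ∈ gr (d i)) → ∀ i j : Fin (m + 1), (i : ℕ) + 1 = (j : ℕ) →
      br x = -sgn 𝔽 (d i * d j) • br (x ∘ Equiv.swap i j)
  alpha_br : ∀ x : Fin (m + 1) → N, α (br x) = br fun i => α (x i)
  jacobi : ∀ (dx : Fin m → ZMod 2) (x : Fin m → N)
      (dy : Fin (m + 1) → ZMod 2) (y : Fin (m + 1) → N),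
      (∀ i, x i ∈ gr (dx i)) → (∀ i, y i ∈ gr (dy i)) →
      br (Fin.snoc (fun i => α (x i)) (br y)) =
        ∑ i : Fin (m + 1), sgn 𝔽 ((∑ j, dx j) * psum dy i) •
          br (Function.update (fun j => α (y j)) i (br (Fin.snoc x (y i))))

/-- `D` is a homogeneous `α^k`-derivation of degree `ξ`. -/
def IsDer {m : ℕ} (gr : ZMod 2 → Submodule 𝔽 N)
    (br : MultilinearMap 𝔽 (fun _ : Fin (m + 1) => N) N) (α : N →ₗ[𝔽] N)
    (k : ℕ) (ξ : ZMod 2) (D : N →ₗ[𝔽] N) : Prop :=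
  Homog gr ξ D ∧ D ∘ₗ α = α ∘ₗ D ∧
    ∀ (d : Fin (m + 1) → ZMod 2) (x : Fin (m + 1) → N), (∀ i, x i ∈ gr (d i)) →
      D (br x) = ∑ i : Fin (m + 1), sgn 𝔽 (ξ * psum d i) •
        br (Function.update (fun j => (α ^ k) (x j)) i (D (x i)))

/-- `D` is a homogeneous `α^k`-quasiderivation of degree `ξ` with associated map `D'`. -/
def IsQDerWith {m : ℕ} (gr : ZMod 2 → Submodule 𝔽 N)
    (br : MultilinearMap 𝔽 (fun _ : Fin (m + 1) => N) N) (α : N →ₗ[𝔽] N)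
    (k : ℕ) (ξ : ZMod 2) (D D' : N →ₗ[𝔽] N) : Prop :=
  Homog gr ξ D ∧ D ∘ₗ α = α ∘ₗ D ∧ Homog gr ξ D' ∧ D' ∘ₗ α = α ∘ₗ D' ∧
    ∀ (d : Fin (m + 1) → ZMod 2) (x : Fin (m + 1) → N), (∀ i, x i ∈ gr (d i)) →
      (∑ i : Fin (m + 1), sgn 𝔽 (ξ * psum d i) •
        br (Function.update (fun j => (α ^ k) (x j)) i (D (x i)))) = D' (br x)

/-- `D` is a homogeneous `α^k`-quasiderivation of degree `ξ`. -/
def IsQDer {m : ℕ} (gr : ZMod 2 → Submodule 𝔽 N)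
    (br : MultilinearMap 𝔽 (fun _ : Fin (m + 1) => N) N) (α : N →ₗ[𝔽] N)
    (k : ℕ) (ξ : ZMod 2) (D : N →ₗ[𝔽] N) : Prop :=
  ∃ D' : N →ₗ[𝔽] N, IsQDerWith gr br α k ξ D D'

/-- `D` is a homogeneous generalized `α^k`-derivation of degree `ξ`:
there are `D⁽¹⁾, …, D⁽ⁿ⁾` (here `DD i` for positions `i = 1, …, n-1`, with `DD 0 = D`,
and `Dn = D⁽ⁿ⁾`) all homogeneous of degree `ξ` and commuting with `α`, satisfying the
defining identity. -/
def IsGDer {m : ℕ} (gr : ZMod 2 → Submodule 𝔽 N)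
    (br : MultilinearMap 𝔽 (fun _ : Fin (m + 1) => N) N) (α : N →ₗ[𝔽] N)
    (k : ℕ) (ξ : ZMod 2) (D : N →ₗ[𝔽] N) : Prop :=
  Homog gr ξ D ∧ D ∘ₗ α = α ∘ₗ D ∧
    ∃ (DD : Fin (m + 1) → (N →ₗ[𝔽] N)) (Dn : N →ₗ[𝔽] N),
      DD 0 = D ∧ (∀ i, Homog gr ξ (DD i)) ∧ (∀ i, DD i ∘ₗ α = α ∘ₗ DD i) ∧
      Homog gr ξ Dn ∧ Dn ∘ₗ α = α ∘ₗ Dn ∧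
      ∀ (d : Fin (m + 1) → ZMod 2) (x : Fin (m + 1) → N), (∀ i, x i ∈ gr (d i)) →
        (∑ i : Fin (m + 1), sgn 𝔽 (ξ * psum d i) •
          br (Function.update (fun j => (α ^ k) (x j)) i (DD i (x i)))) = Dn (br x)

/-- `D` is a homogeneous `α^k`-centroid element of degree `ξ`. -/
def IsCent {m : ℕ} (gr : ZMod 2 → Submodule 𝔽 N)
    (br : MultilinearMap 𝔽 (fun _ : Fin (m + 1) => N) N) (α : N →ₗ[𝔽] N)
    (k : ℕ) (ξ : ZMod 2) (D : N →ₗ[𝔽] N) : Prop :=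
  Homog gr ξ D ∧ D ∘ₗ α = α ∘ₗ D ∧
    ∀ (d : Fin (m + 1) → ZMod 2) (x : Fin (m + 1) → N), (∀ i, x i ∈ gr (d i)) →
      (∀ i : Fin (m + 1),
        br (Function.update (fun j => (α ^ k) (x j)) 0 (D (x 0))) =
          sgn 𝔽 (ξ * psum d i) •
            br (Function.update (fun j => (α ^ k) (x j)) i (D (x i)))) ∧
      br (Function.update (fun j => (α ^ k) (x j)) 0 (D (x 0))) = D (br x)

/-- `D` is a homogeneous `α^k`-quasicentroid element of degree `ξ`. -/
def IsQCent {m : ℕ} (gr : ZMod 2 → Submodule 𝔽 N)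
    (br : MultilinearMap 𝔽 (fun _ : Fin (m + 1) => N) N) (α : N →ₗ[𝔽] N)
    (k : ℕ) (ξ : ZMod 2) (D : N →ₗ[𝔽] N) : Prop :=
  Homog gr ξ D ∧ D ∘ₗ α = α ∘ₗ D ∧
    ∀ (d : Fin (m + 1) → ZMod 2) (x : Fin (m + 1) → N), (∀ i, x i ∈ gr (d i)) →
      ∀ i : Fin (m + 1),
        br (Function.update (fun j => (α ^ k) (x j)) 0 (D (x 0))) =
          sgn 𝔽 (ξ * psum d i) •
            br (Function.update (fun j => (α ^ k) (x j)) i (D (x i)))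

/-- `D` is a homogeneous `α^k`-center derivation of degree `ξ`. -/
def IsZDer {m : ℕ} (gr : ZMod 2 → Submodule 𝔽 N)
    (br : MultilinearMap 𝔽 (fun _ : Fin (m + 1) => N) N) (α : N →ₗ[𝔽] N)
    (k : ℕ) (ξ : ZMod 2) (D : N →ₗ[𝔽] N) : Prop :=
  Homog gr ξ D ∧ D ∘ₗ α = α ∘ₗ D ∧
    ∀ (d : Fin (m + 1) → ZMod 2) (x : Fin (m + 1) → N), (∀ i, x i ∈ gr (d i)) →
      br (Function.update (fun j => (α ^ k) (x j)) 0 (D (x 0))) = 0 ∧ D (br x) = 0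

/-- The center `Z(N) = {x : [x, y₂, …, yₙ] = 0}`. -/
def center {m : ℕ} (br : MultilinearMap 𝔽 (fun _ : Fin (m + 1) => N) N) :
    Submodule 𝔽 N where
  carrier := {x | ∀ y : Fin (m + 1) → N, br (Function.update y 0 x) = 0}
  add_mem' := by
    intro a b ha hb y
    rw [MultilinearMap.map_update_add, ha y, hb y, add_zero]
  zero_mem' := by
    intro y
    exact br.map_update_zero y 0
  smul_mem' := by
    intro c a ha y
    rw [MultilinearMap.map_update_smul, ha y, smul_zero]

/-- The Jordan product `D • E = ½(DE + (-1)^{|D||E|} ED)` of operators of degrees `ξ, η`. -/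
def jprod (𝔽 : Type*) [Field 𝔽] {N : Type*} [AddCommGroup N] [Module 𝔽 N]
    (ξ η : ZMod 2) (D E : N →ₗ[𝔽] N) : N →ₗ[𝔽] N :=
  (2 : 𝔽)⁻¹ • (D ∘ₗ E + sgn 𝔽 (ξ * η) • (E ∘ₗ D))

/-- The Hom-associator of the Jordan product with respect to `α̃(u) = α ∘ u`, where
`x, y, z` have degrees `a, b, c`. -/
def jassoc (𝔽 : Type*) [Field 𝔽] {N : Type*} [AddCommGroup N] [Module 𝔽 N]
    (α : N →ₗ[𝔽] N) (a b c : ZMod 2) (x y z : N →ₗ[𝔽] N) : N →ₗ[𝔽] N :=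
  jprod 𝔽 (a + b) c (jprod 𝔽 a b x y) (α ∘ₗ z) -
    jprod 𝔽 a (b + c) (α ∘ₗ x) (jprod 𝔽 b c y z)

/-- The bracket subalgebra `[N, …, N]`, the span of all brackets. -/
def brSub {m : ℕ} (br : MultilinearMap 𝔽 (fun _ : Fin (m + 1) => N) N) :
    Submodule 𝔽 N :=
  Submodule.span 𝔽 (Set.range fun x : Fin (m + 1) → N => br x)

/-- The bracket of `Ň = Nt + Ntⁿ` (modelled as `N × N`, first coordinate the coefficient
of `t`, second the coefficient of `tⁿ`): `[x₁t, …, xₙt] = [x₁, …, xₙ]tⁿ` and every bracket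
involving a `tⁿ`-term vanishes. -/
def checkBr {m : ℕ} (br : MultilinearMap 𝔽 (fun _ : Fin (m + 1) => N) N) :
    MultilinearMap 𝔽 (fun _ : Fin (m + 1) => N × N) (N × N) :=
  (LinearMap.inr 𝔽 N N).compMultilinearMap
    (br.compLinearMap fun _ => LinearMap.fst 𝔽 N N)

/-- The grading of `Ň = Nt + Ntⁿ`. -/
def checkGr (gr : ZMod 2 → Submodule 𝔽 N) (g : ZMod 2) : Submodule 𝔽 (N × N) :=
  (gr g).prod (gr g)

/-- The map `φ(D) : Ň → Ň`, `φ(D)(at + utⁿ + btⁿ) = D(a)t + D'(b)tⁿ`, where `π` is the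
projection of `N` onto `[N, …, N]` along `U`. -/
def phiMap (D D' π : N →ₗ[𝔽] N) : N × N →ₗ[𝔽] N × N :=
  LinearMap.prodMap D (D' ∘ₗ π)

/-! Take `D⁽¹⁾ = D + E`, `D⁽²⁾ = D - E`, `D⁽ⁱ⁾ = D` otherwise and `D⁽ⁿ⁾ = D'`. Besides the
quasiderivation sum of `D`, the generalized Leibniz sum then contains only the two terms
`[E x₁, α^k x₂, …]` and `-(-1)^{ξ|x₁|}[α^k x₁, E x₂, …]`, which cancel because `E` is a
quasicentroid element. -/

section

variable {m : ℕ}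

theorem sgn_zero : sgn 𝔽 0 = 1 := if_pos rfl

theorem psum_zero (d : Fin (m + 1) → ZMod 2) : psum d 0 = 0 :=
  Finset.sum_eq_zero fun j hj => absurd (Finset.mem_filter.1 hj).2 (Fin.not_lt_zero j)

variable (𝔽) in
def homogCommSubmodule (gr : ZMod 2 → Submodule 𝔽 N) (α : N →ₗ[𝔽] N) (ξ : ZMod 2) :
    Submodule 𝔽 (N →ₗ[𝔽] N) where
  carrier := {D | Homog gr ξ D ∧ D ∘ₗ α = α ∘ₗ D}
  add_mem' := fun ⟨hDh, hDα⟩ ⟨hEh, hEα⟩ =>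
    ⟨fun g x hx => add_mem (hDh g x hx) (hEh g x hx), by
      rw [LinearMap.add_comp, LinearMap.comp_add, hDα, hEα]⟩
  zero_mem' := ⟨fun g _ _ => zero_mem _, by rw [LinearMap.zero_comp, LinearMap.comp_zero]⟩
  smul_mem' := fun c _ ⟨hDh, hDα⟩ =>
    ⟨fun g x hx => Submodule.smul_mem _ c (hDh g x hx), by
      rw [LinearMap.smul_comp, LinearMap.comp_smul, hDα]⟩

variable (br : MultilinearMap 𝔽 (fun _ : Fin (m + 1) => N) N) (α : N →ₗ[𝔽] N) (k : ℕ)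
  (ξ : ZMod 2) (d : Fin (m + 1) → ZMod 2) (x : Fin (m + 1) → N)

def leibnizSum (DD : Fin (m + 1) → N →ₗ[𝔽] N) : N :=
  ∑ i, sgn 𝔽 (ξ * psum d i) • br (Function.update (fun j => (α ^ k) (x j)) i (DD i (x i)))

theorem leibnizSum_add (DD DD' : Fin (m + 1) → N →ₗ[𝔽] N) :
    leibnizSum br α k ξ d x (DD + DD') =
      leibnizSum br α k ξ d x DD + leibnizSum br α k ξ d x DD' := by
  simp only [leibnizSum, Pi.add_apply, LinearMap.add_apply, MultilinearMap.map_update_add,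
    smul_add, Finset.sum_add_distrib]

theorem leibnizSum_sub (DD DD' : Fin (m + 1) → N →ₗ[𝔽] N) :
    leibnizSum br α k ξ d x (DD - DD') =
      leibnizSum br α k ξ d x DD - leibnizSum br α k ξ d x DD' := by
  simp only [leibnizSum, Pi.sub_apply, LinearMap.sub_apply, MultilinearMap.map_update_sub,
    smul_sub, Finset.sum_sub_distrib]

theorem leibnizSum_single (i : Fin (m + 1)) (E : N →ₗ[𝔽] N) :
    leibnizSum br α k ξ d x (Pi.single i E) =
      sgn 𝔽 (ξ * psum d i) • br (Function.update (fun j => (α ^ k) (x j)) i (E (x i))) := by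
  refine (Finset.sum_eq_single i (fun j _ hji => ?_) (by simp)).trans (by rw [Pi.single_eq_same])
  rw [Pi.single_eq_of_ne hji, LinearMap.zero_apply, br.map_update_zero, smul_zero]

end

theorem qder_add_qcent_gder_general {𝔽 : Type*} [Field 𝔽]
    {N : Type*} [AddCommGroup N] [Module 𝔽 N] {m : ℕ} (hm : 1 ≤ m)
    (gr : ZMod 2 → Submodule 𝔽 N) (br : MultilinearMap 𝔽 (fun _ : Fin (m + 1) => N) N)
    (α : N →ₗ[𝔽] N)
    (k : ℕ) (ξ : ZMod 2) (D E : N →ₗ[𝔽] N)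
    (hD : IsQDer gr br α k ξ D) (hE : IsQCent gr br α k ξ E) :
    IsGDer gr br α k ξ (D + E) := by
  obtain ⟨D', hDh, hDα, hD'h, hD'α, hDeq⟩ := hD
  obtain ⟨hEh, hEα, hEeq⟩ := hE
  have h01 : (0 : Fin (m + 1)) ≠ 1 := by
    rw [Ne, Fin.ext_iff, Fin.val_one', Nat.mod_eq_of_lt (by omega)]
    exact zero_ne_one
  let DD : Fin (m + 1) → N →ₗ[𝔽] N := (fun _ => D) + Pi.single 0 E - Pi.single 1 E
  have hDD0 : DD 0 = D + E := by simp [DD, h01]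
  have hDD : ∀ i, DD i ∈ homogCommSubmodule 𝔽 gr α ξ := fun i => by
    have hE' : E ∈ homogCommSubmodule 𝔽 gr α ξ := ⟨hEh, hEα⟩
    refine sub_mem (add_mem ⟨hDh, hDα⟩ ?_) ?_ <;>
      · rw [Pi.single_apply]; split_ifs <;> simp [hE']
  refine ⟨(hDD0 ▸ hDD 0).1, (hDD0 ▸ hDD 0).2, DD, D', hDD0, fun i => (hDD i).1,
    fun i => (hDD i).2, hD'h, hD'α, fun d x hx => ?_⟩
  change leibnizSum br α k ξ d x DD = _
  rw [leibnizSum_sub, leibnizSum_add, leibnizSum_single, leibnizSum_single, psum_zero,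
    mul_zero, sgn_zero, one_smul, ← hEeq d x hx 1, add_sub_cancel_right]
  exact hDeq d x hx

/-- Proposition 3.2(6): `QDer(N) + QC(N) ⊆ GDer(N)`: the sum of a homogeneous
`α^k`-quasiderivation of degree `ξ` and a homogeneous `α^k`-quasicentroid element of
degree `ξ` is a homogeneous generalized `α^k`-derivation of degree `ξ`. -/
theorem qder_add_qcent_gder {𝔽 : Type*} [Field 𝔽] [CharZero 𝔽]
    {N : Type*} [AddCommGroup N] [Module 𝔽 N] {m : ℕ} (hm : 1 ≤ m)
    (gr : ZMod 2 → Submodule 𝔽 N) (br : MultilinearMap 𝔽 (fun _ : Fin (m + 1) => N) N)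
    (α : N →ₗ[𝔽] N) (H : IsMNHLS gr br α)
    (k : ℕ) (ξ : ZMod 2) (D E : N →ₗ[𝔽] N)
    (hD : IsQDer gr br α k ξ D) (hE : IsQCent gr br α k ξ E) :
    IsGDer gr br α k ξ (D + E) :=
  qder_add_qcent_gder_general hm gr br α k ξ D E hD hE
end
end

section
/- Let N be a multiplicative n-Hom Lie superalgebra with α surjective. Then [C(N), QC(N)] ⊆ Hom(N, Z(N)): for every homogeneous α^k-centroid element D of degree ξ and every homogeneous α^s-quasicentroid element E of degree η, the supercommutator [D,E] = DE − (−1)^{ξη}ED maps N into the center Z(N). Moreover, if Z(N) = {0} then [C(N), QC(N)] = {0}. -/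
open scoped BigOperators

noncomputable section

variable {𝔽 : Type*} [Field 𝔽]
variable {N : Type*} [AddCommGroup N] [Module 𝔽 N]

/-! For homogeneous `x` and `y₂, …, yₙ`, the centroid identity for `D` and the quasicentroid
identity for `E` (which moves `E` from the first slot to the second) turn both
`[DE x, α^{k+s} y₂, …]` and `[ED x, α^{k+s} y₂, …]` into multiples of the same bracket
`[D α^s x, α^k E y₂, α^{k+s} y₃, …]`, with signs `(-1)^{η|x|}` and `(-1)^{η(|x|+ξ)}`. These
differ by exactly `(-1)^{ξη}`, so `[D, E] x` brackets to zero against `α^{k+s}`-images of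
homogeneous elements; homogeneous elements span `N` and `α^{k+s}` is surjective. -/

open Function

lemma sgn_mul_sgn (a b : ZMod 2) : sgn 𝔽 a * sgn 𝔽 b = sgn 𝔽 (a + b) := by
  have h : ∀ c : ZMod 2, c = 0 ∨ c = 1 := by decide
  rcases h a with rfl | rfl <;> rcases h b with rfl | rfl <;>
    simp [sgn, show (1 + 1 : ZMod 2) = 0 from rfl]

lemma psum_one {m : ℕ} (hm : 1 ≤ m) (d : Fin (m + 1) → ZMod 2) : psum d 1 = d 0 := by
  have h1 : ((1 : Fin (m + 1)) : ℕ) = 1 := by rw [Fin.val_one', Nat.mod_eq_of_lt (by omega)]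
  have hfilter : Finset.univ.filter (fun j : Fin (m + 1) => j < 1) = {0} := by
    ext j
    simp only [Finset.mem_filter, Finset.mem_univ, true_and, Finset.mem_singleton, Fin.lt_def,
      h1, Fin.ext_iff, Fin.val_zero]
    omega
  rw [psum, hfilter, Finset.sum_singleton]

lemma Fin.one_ne_zero_of_one_le {m : ℕ} (hm : 1 ≤ m) : (1 : Fin (m + 1)) ≠ 0 := by
  simp [Fin.ext_iff, Nat.mod_eq_of_lt (show 1 < m + 1 by omega)]

lemma MultilinearMap.eq_zero_of_forall_homogeneous {R G ι M M' : Type*} [CommRing R] [Finite ι]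
    [AddCommGroup M] [Module R M] [AddCommGroup M'] [Module R M'] {gr : G → Submodule R M}
    (hgr : ⨆ g, gr g = ⊤) (f : MultilinearMap R (fun _ : ι => M) M')
    (hf : ∀ (d : ι → G) (x : ι → M), (∀ i, x i ∈ gr (d i)) → f x = 0) : f = 0 := by
  refine MultilinearMap.ext_of_span_eq_top (g := fun _ (p : Σ g, gr g) => (p.2 : M)) ?_ ?_
  · intro _
    rw [eq_top_iff, ← hgr]
    exact iSup_le fun g x hx => Submodule.subset_span ⟨⟨g, x, hx⟩, rfl⟩
  · intro j
    exact hf (fun i => (j i).1) _ fun i => (j i).2.2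

section

variable {gr : ZMod 2 → Submodule 𝔽 N} {α : N →ₗ[𝔽] N}

lemma update_const_apply {ι : Type*} [DecidableEq ι] (A T : N →ₗ[𝔽] N) (i₀ : ι) (W : ι → N) :
    (fun i => update (fun _ => A) i₀ T i (W i)) = update (fun i => A (W i)) i₀ (T (W i₀)) := by
  funext i
  by_cases hi : i = i₀
  · subst hi
    simp
  · simp [hi]

lemma pow_apply_mem (hα : ∀ g, ∀ x ∈ gr g, α x ∈ gr g) (s : ℕ) {g : ZMod 2} {x : N}
    (hx : x ∈ gr g) : (α ^ s) x ∈ gr g := by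
  rw [Module.End.pow_apply]
  exact Set.MapsTo.iterate (hα g) s hx

lemma update_pow_apply_mem {m : ℕ} (hα : ∀ g, ∀ x ∈ gr g, α x ∈ gr g) (s : ℕ)
    {Z : Fin m → N} {d : Fin m → ZMod 2} (hZ : ∀ i, Z i ∈ gr (d i))
    (i₀ : Fin m) {a : N} {e : ZMod 2} (ha : a ∈ gr e) (i : Fin m) :
    update (fun j => (α ^ s) (Z j)) i₀ a i ∈ gr (update d i₀ e i) := by
  by_cases hi : i = i₀
  · subst hi
    simpa using ha
  · simpa [hi] using pow_apply_mem hα s (hZ i)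

lemma pow_apply_comm {D : N →ₗ[𝔽] N} (h : D ∘ₗ α = α ∘ₗ D) (s : ℕ) (x : N) :
    D ((α ^ s) x) = (α ^ s) (D x) :=
  LinearMap.congr_fun ((show Commute D α from h).pow_right s) x

variable {m : ℕ} {br : MultilinearMap 𝔽 (fun _ : Fin (m + 1) => N) N} {k s : ℕ} {ξ η : ZMod 2}
  {D E : N →ₗ[𝔽] N} {Z : Fin (m + 1) → N} {d : Fin (m + 1) → ZMod 2}

lemma IsCent.br_comp_isQCent_eq_smul (hm : 1 ≤ m) (hα : ∀ g, ∀ x ∈ gr g, α x ∈ gr g)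
    (hD : IsCent gr br α k ξ D) (hE : IsQCent gr br α s η E) (hZ : ∀ i, Z i ∈ gr (d i)) :
    br (update (fun j => (α ^ (k + s)) (Z j)) 0 (D (E (Z 0)))) =
      sgn 𝔽 (η * d 0) • br (update (update (fun j => (α ^ (k + s)) (Z j))
        0 (D ((α ^ s) (Z 0)))) 1 ((α ^ k) (E (Z 1)))) := by
  have h10 := Fin.one_ne_zero_of_one_le hm
  set v := update (fun j => (α ^ s) (Z j)) 0 (E (Z 0))
  set t := update (fun j => (α ^ s) (Z j)) 1 (E (Z 1))
  have hDv : update (fun j => (α ^ k) (v j)) 0 (D (v 0)) =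
      update (fun j => (α ^ (k + s)) (Z j)) 0 (D (E (Z 0))) := by
    funext j
    by_cases hj : j = 0 <;> simp [v, hj, pow_add]
  have hDt : update (fun j => (α ^ k) (t j)) 0 (D (t 0)) =
      update (update (fun j => (α ^ (k + s)) (Z j)) 0 (D ((α ^ s) (Z 0)))) 1
        ((α ^ k) (E (Z 1))) := by
    funext j
    by_cases hj1 : j = 1
    · simp [t, hj1, h10]
    · by_cases hj0 : j = 0 <;> simp [t, hj0, hj1, h10.symm, pow_add]
  calc br (update (fun j => (α ^ (k + s)) (Z j)) 0 (D (E (Z 0))))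
      = D (br v) := by
        rw [← hDv]
        exact (hD.2.2 _ v (update_pow_apply_mem hα s hZ 0 (hE.1 _ _ (hZ 0)))).2
    _ = D (sgn 𝔽 (η * d 0) • br t) := by rw [hE.2.2 d Z hZ 1, psum_one hm]
    _ = _ := by
        rw [map_smul, ← (hD.2.2 _ t (update_pow_apply_mem hα s hZ 1 (hE.1 _ _ (hZ 1)))).2, hDt]

lemma IsQCent.br_comp_homog_eq_smul (hm : 1 ≤ m) (hα : ∀ g, ∀ x ∈ gr g, α x ∈ gr g)
    (hD : Homog gr ξ D) (hDα : D ∘ₗ α = α ∘ₗ D) (hE : IsQCent gr br α s η E)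
    (hZ : ∀ i, Z i ∈ gr (d i)) :
    br (update (fun j => (α ^ (k + s)) (Z j)) 0 (E (D (Z 0)))) =
      sgn 𝔽 (η * (d 0 + ξ)) • br (update (update (fun j => (α ^ (k + s)) (Z j))
        0 (D ((α ^ s) (Z 0)))) 1 ((α ^ k) (E (Z 1)))) := by
  have h10 := Fin.one_ne_zero_of_one_le hm
  set u := update (fun j => (α ^ k) (Z j)) 0 (D (Z 0))
  have hu := hE.2.2 _ u (update_pow_apply_mem hα k hZ 0 (hD _ _ (hZ 0))) 1
  have h0 : update (fun j => (α ^ s) (u j)) 0 (E (u 0)) =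
      update (fun j => (α ^ (k + s)) (Z j)) 0 (E (D (Z 0))) := by
    funext j
    by_cases hj : j = 0 <;> simp [u, hj, pow_add, add_comm k s]
  have h1 : update (fun j => (α ^ s) (u j)) 1 (E (u 1)) =
      update (update (fun j => (α ^ (k + s)) (Z j)) 0 (D ((α ^ s) (Z 0)))) 1
        ((α ^ k) (E (Z 1))) := by
    funext j
    by_cases hj1 : j = 1
    · simp [u, hj1, h10, pow_apply_comm hE.2.1]
    · by_cases hj0 : j = 0 <;>
        simp [u, hj0, hj1, h10.symm, pow_apply_comm hDα, pow_add, add_comm k s]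
  rwa [psum_one hm, update_self, h0, h1] at hu

lemma IsCent.br_supercommutator_isQCent_eq_zero (hm : 1 ≤ m)
    (hα : ∀ g, ∀ x ∈ gr g, α x ∈ gr g) (hD : IsCent gr br α k ξ D)
    (hE : IsQCent gr br α s η E) (hZ : ∀ i, Z i ∈ gr (d i)) :
    br (update (fun j => (α ^ (k + s)) (Z j)) 0 (D (E (Z 0)) - sgn 𝔽 (ξ * η) • E (D (Z 0)))) =
      0 := by
  have hsign : ξ * η + η * (d 0 + ξ) = η * d 0 := by
    have h : ∀ a b c : ZMod 2, a * b + b * (c + a) = b * c := by decide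
    exact h ξ η (d 0)
  rw [br.map_update_sub, br.map_update_smul, hD.br_comp_isQCent_eq_smul hm hα hE hZ,
    hE.br_comp_homog_eq_smul hm hα hD.1 hD.2.1 hZ, smul_smul, sgn_mul_sgn, hsign, sub_self]

end

theorem cent_bracket_qcent_center_general {𝔽 : Type*} [Field 𝔽]
    {N : Type*} [AddCommGroup N] [Module 𝔽 N] {m : ℕ} (hm : 1 ≤ m)
    (gr : ZMod 2 → Submodule 𝔽 N) (br : MultilinearMap 𝔽 (fun _ : Fin (m + 1) => N) N)
    (α : N →ₗ[𝔽] N) (H : IsMNHLS gr br α) (hα : Function.Surjective α)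
    (k s : ℕ) (ξ η : ZMod 2) (D E : N →ₗ[𝔽] N)
    (hD : IsCent gr br α k ξ D) (hE : IsQCent gr br α s η E) :
    (∀ x : N, (D ∘ₗ E - sgn 𝔽 (ξ * η) • (E ∘ₗ D)) x ∈ center br) ∧
      (center br = ⊥ → D ∘ₗ E - sgn 𝔽 (ξ * η) • (E ∘ₗ D) = 0) := by
  set T := D ∘ₗ E - sgn 𝔽 (ξ * η) • (E ∘ₗ D)
  have hF : br.compLinearMap (update (fun _ => α ^ (k + s)) 0 T) = 0 := by
    refine MultilinearMap.eq_zero_of_forall_homogeneous H.internal.submodule_iSup_eq_top _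
      fun d Z hZ => ?_
    rw [MultilinearMap.compLinearMap_apply, update_const_apply]
    exact hD.br_supercommutator_isQCent_eq_zero hm H.alpha_even hE hZ
  have hsurj : Surjective ⇑(α ^ (k + s)) := Module.End.coe_pow α (k + s) ▸ hα.iterate _
  have hT : ∀ x, T x ∈ center br := by
    intro x y
    choose z hz using fun j => hsurj (y j)
    calc br (update y 0 (T x))
        = br.compLinearMap (update (fun _ => α ^ (k + s)) 0 T) (update z 0 x) := by
          rw [MultilinearMap.compLinearMap_apply, update_const_apply, update_self]
          congr 1
          funext j
          by_cases hj : j = 0 <;> simp [hj, hz]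
      _ = 0 := by rw [hF]; rfl
  refine ⟨hT, fun hZ => LinearMap.ext fun x => ?_⟩
  simpa [hZ] using hT x

/-- Proposition 3.4: if `α` is surjective then `[C(N), QC(N)] ⊆ Hom(N, Z(N))`;
moreover if `Z(N) = {0}` then `[C(N), QC(N)] = {0}`. -/
theorem cent_bracket_qcent_center {𝔽 : Type*} [Field 𝔽] [CharZero 𝔽]
    {N : Type*} [AddCommGroup N] [Module 𝔽 N] {m : ℕ} (hm : 1 ≤ m)
    (gr : ZMod 2 → Submodule 𝔽 N) (br : MultilinearMap 𝔽 (fun _ : Fin (m + 1) => N) N)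
    (α : N →ₗ[𝔽] N) (H : IsMNHLS gr br α) (hα : Function.Surjective α)
    (k s : ℕ) (ξ η : ZMod 2) (D E : N →ₗ[𝔽] N)
    (hD : IsCent gr br α k ξ D) (hE : IsQCent gr br α s η E) :
    (∀ x : N, (D ∘ₗ E - sgn 𝔽 (ξ * η) • (E ∘ₗ D)) x ∈ center br) ∧
      (center br = ⊥ → D ∘ₗ E - sgn 𝔽 (ξ * η) • (E ∘ₗ D) = 0) :=
  cent_bracket_qcent_center_general hm gr br α H hα k s ξ η D E hD hE
end
end

section
/- Let (Ω, [·,·], α̃) be the Hom-Lie superalgebra of all u ∈ End(N) commuting with α, for a multiplicative n-Hom Lie superalgebra N. Define the even product D • E = ½(DE + (−1)^{|D||E|}ED) for homogeneous D, E ∈ Ω. Then (Ω, •, α̃) is a Hom-Jordan superalgebra: D • E = (−1)^{|D||E|}E • D, and the super-Hom-Jordan identity (−1)^{γ(ξ+θ)}as(D_ξ • D_η, α̃(D_θ), α̃(D_γ)) + (−1)^{ξ(η+θ)}as(D_η • D_γ, α̃(D_θ), α̃(D_ξ)) + (−1)^{η(γ+θ)}as(D_γ • D_ξ, α̃(D_θ),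 α̃(D_η)) = 0 holds for all homogeneous D_ξ, D_η, D_θ, D_γ ∈ Ω of degrees ξ, η, θ, γ, where as(x,y,z) = (x • y) • α̃(z) − α̃(x) • (y • z). -/
open scoped BigOperators

noncomputable section

variable {𝔽 : Type*} [Field 𝔽]
variable {N : Type*} [AddCommGroup N] [Module 𝔽 N]

set_option maxHeartbeats 4000000 in
/-- Proposition 3.8(1): `(Ω, •, α̃)` is a Hom-Jordan superalgebra, where
`Ω = {u ∈ End(N) : uα = αu}`, `D • E = ½(DE + (-1)^{|D||E|} ED)` and `α̃(u) = α ∘ u`: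
the product is supercommutative and the super-Hom-Jordan identity holds for all
homogeneous elements of `Ω`. -/
theorem omega_hom_jordan {𝔽 : Type*} [Field 𝔽] [CharZero 𝔽]
    {N : Type*} [AddCommGroup N] [Module 𝔽 N] {m : ℕ} (hm : 1 ≤ m)
    (gr : ZMod 2 → Submodule 𝔽 N) (br : MultilinearMap 𝔽 (fun _ : Fin (m + 1) => N) N)
    (α : N →ₗ[𝔽] N) (H : IsMNHLS gr br α)
    (ξ η θ γ : ZMod 2) (Dξ Dη Dθ Dγ : N →ₗ[𝔽] N)
    (hξ : Homog gr ξ Dξ) (hξα : Dξ ∘ₗ α = α ∘ₗ Dξ)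
    (hη : Homog gr η Dη) (hηα : Dη ∘ₗ α = α ∘ₗ Dη)
    (hθ : Homog gr θ Dθ) (hθα : Dθ ∘ₗ α = α ∘ₗ Dθ)
    (hγ : Homog gr γ Dγ) (hγα : Dγ ∘ₗ α = α ∘ₗ Dγ) :
    jprod 𝔽 ξ η Dξ Dη = sgn 𝔽 (ξ * η) • jprod 𝔽 η ξ Dη Dξ ∧
      sgn 𝔽 (γ * (ξ + θ)) •
          jassoc 𝔽 α (ξ + η) θ γ (jprod 𝔽 ξ η Dξ Dη) (α ∘ₗ Dθ) (α ∘ₗ Dγ) +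
        sgn 𝔽 (ξ * (η + θ)) •
          jassoc 𝔽 α (η + γ) θ ξ (jprod 𝔽 η γ Dη Dγ) (α ∘ₗ Dθ) (α ∘ₗ Dξ) +
        sgn 𝔽 (η * (γ + θ)) •
          jassoc 𝔽 α (γ + ξ) θ η (jprod 𝔽 γ ξ Dγ Dξ) (α ∘ₗ Dθ) (α ∘ₗ Dη) = 0 := by
  have push : ∀ {D : N →ₗ[𝔽] N}, D ∘ₗ α = α ∘ₗ D → ∀ X : N →ₗ[𝔽] N,
      D ∘ₗ (α ∘ₗ X) = α ∘ₗ (D ∘ₗ X) := fun h X => by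
    rw [← LinearMap.comp_assoc, h, LinearMap.comp_assoc]
  have hcases : ∀ a : ZMod 2, a = 0 ∨ a = 1 := by decide
  constructor
  · rcases hcases ξ with rfl | rfl <;> rcases hcases η with rfl | rfl <;>
      simp (config := { decide := true }) only [jprod, sgn, mul_zero, zero_mul, mul_one,
        one_mul, if_true, if_false, eq_self_iff_true, one_ne_zero, one_smul, smul_add,
        smul_smul] <;>
      module
  · rcases hcases ξ with rfl | rfl <;> rcases hcases η with rfl | rfl <;>
      rcases hcases θ with rfl | rfl <;> rcases hcases γ with rfl | rfl <;>
      simp (config := { decide := true }) only [jassoc, jprod, sgn, add_zero, zero_add,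
        mul_zero, zero_mul, mul_one, one_mul, if_true, if_false, one_smul,
        LinearMap.neg_comp, LinearMap.comp_neg,
        LinearMap.comp_add, LinearMap.add_comp, LinearMap.comp_smul, LinearMap.smul_comp,
        LinearMap.comp_assoc, push hξα, push hηα, push hθα, push hγα, hξα, hηα, hθα, hγα,
        smul_add, smul_sub, smul_smul, smul_neg] <;>
      module
end
end

section
/- Let (N, [·,…,·], α) be a multiplicative n-Hom Lie superalgebra over 𝔽 and t an indeterminate. Define Ň := {Σ(x ⊗ t + y ⊗ t^n) : x, y ∈ N} ⊆ N ⊗ 𝔽[t]/(t^{n+1}), with the bracket [x₁ ⊗ t^{j₁},…,xₙ ⊗ t^{jₙ}] = [x₁,…,xₙ] ⊗ t^{Σ_{k=1}^{n} j_k} for j_k ∈ {1, n} (which vanishes whenever Σ j_k ≥ n+1), and α̌(Σ(x ⊗ t + y ⊗ t^n)) = Σ(α(x) ⊗ t + α(y) ⊗ t^n). Then (Ň, [·,…,·], α̌) is a multiplicative n-Hom Lie superalgebra. -/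
open scoped BigOperators

noncomputable section

variable {𝔽 : Type*} [Field 𝔽]
variable {N : Type*} [AddCommGroup N] [Module 𝔽 N]

/-! In `Ň` every bracket lands in the `Ntⁿ` component, while the bracket only sees the
`Nt` components of its arguments; hence every nested bracket vanishes and both sides of the
super Hom-Jacobi identity are zero. The other axioms hold in the `Nt` and `Ntⁿ` components
separately, where they are those of `N`. -/

theorem Submodule.isCompl_prod {R M M' : Type*} [Ring R] [AddCommGroup M] [Module R M]
    [AddCommGroup M'] [Module R M'] {p q : Submodule R M} {p' q' : Submodule R M'}
    (h : IsCompl p q) (h' : IsCompl p' q') : IsCompl (p.prod p') (q.prod q') where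
  disjoint := by
    rw [disjoint_iff, Submodule.prod_inf_prod, h.inf_eq_bot, h'.inf_eq_bot, Submodule.prod_bot]
  codisjoint := by
    rw [codisjoint_iff, Submodule.prod_sup_prod, h.sup_eq_top, h'.sup_eq_top,
      Submodule.prod_top]

theorem DirectSum.IsInternal.submodule_prod {R M M' ι : Type*} [Ring R] [AddCommGroup M]
    [Module R M] [AddCommGroup M'] [Module R M'] [DecidableEq ι] {A : ι → Submodule R M}
    {B : ι → Submodule R M'} {i j : ι} (hij : i ≠ j) (huniv : (Set.univ : Set ι) = {i, j})
    (hA : DirectSum.IsInternal A) (hB : DirectSum.IsInternal B) :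
    DirectSum.IsInternal fun k => (A k).prod (B k) := by
  rw [DirectSum.isInternal_submodule_iff_isCompl _ hij huniv] at hA hB ⊢
  exact Submodule.isCompl_prod hA hB

theorem ZMod.univ_two : (Set.univ : Set (ZMod 2)) = {0, 1} :=
  (Set.eq_univ_of_forall fun g => (by decide : ∀ g : ZMod 2, g = 0 ∨ g = 1) g).symm

section CheckAlgebra

variable {m : ℕ} (gr : ZMod 2 → Submodule 𝔽 N)
  (br : MultilinearMap 𝔽 (fun _ : Fin (m + 1) => N) N)

theorem checkBr_apply (x : Fin (m + 1) → N × N) :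
    checkBr br x = (0, br fun i => (x i).1) :=
  rfl

theorem checkBr_eq_zero_of_fst_eq_zero {x : Fin (m + 1) → N × N} (i : Fin (m + 1))
    (hi : (x i).1 = 0) : checkBr br x = 0 := by
  rw [checkBr_apply, br.map_coord_zero i hi]
  rfl

theorem checkBr_update_checkBr (y : Fin (m + 1) → N × N) (i : Fin (m + 1))
    (x : Fin (m + 1) → N × N) : checkBr br (Function.update y i (checkBr br x)) = 0 :=
  checkBr_eq_zero_of_fst_eq_zero br i (by rw [Function.update_self]; rfl)

theorem checkBr_snoc_checkBr (y : Fin m → N × N) (x : Fin (m + 1) → N × N) :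
    checkBr br (Fin.snoc y (checkBr br x)) = 0 :=
  checkBr_eq_zero_of_fst_eq_zero br (Fin.last m) (by rw [Fin.snoc_last]; rfl)

theorem checkGr_isInternal (h : DirectSum.IsInternal gr) :
    DirectSum.IsInternal (checkGr gr) :=
  h.submodule_prod (by decide) ZMod.univ_two h

end CheckAlgebra

theorem check_is_mnhls_general {𝔽 : Type*} [Field 𝔽]
    {N : Type*} [AddCommGroup N] [Module 𝔽 N] {m : ℕ}
    (gr : ZMod 2 → Submodule 𝔽 N) (br : MultilinearMap 𝔽 (fun _ : Fin (m + 1) => N) N)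
    (α : N →ₗ[𝔽] N) (H : IsMNHLS gr br α) :
    IsMNHLS (checkGr gr) (checkBr br) (α.prodMap α) := by
  constructor
  · exact checkGr_isInternal gr H.internal
  · exact fun g x hx => ⟨H.alpha_even g x.1 hx.1, H.alpha_even g x.2 hx.2⟩
  · exact fun d x hx => ⟨zero_mem _, H.br_deg d (fun i => (x i).1) fun i => (hx i).1⟩
  · intro d x hx i j hij
    rw [checkBr_apply, checkBr_apply, Prod.smul_mk, smul_zero,
      H.skew d (fun k => (x k).1) (fun k => (hx k).1) i j hij]
    rfl
  · intro x
    rw [checkBr_apply, checkBr_apply, LinearMap.prodMap_apply, map_zero, H.alpha_br]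
    rfl
  · intro dx x dy y _ _
    simp only [checkBr_snoc_checkBr, checkBr_update_checkBr, smul_zero,
      Finset.sum_const_zero]

/-- Proposition 4.1: `Ň = Nt + Ntⁿ` (modelled as `N × N`), with the bracket
`[x₁ ⊗ t^{j₁}, …, xₙ ⊗ t^{jₙ}] = [x₁, …, xₙ] ⊗ t^{Σ jₖ}` (which vanishes whenever
`Σ jₖ ≥ n + 1`) and `α̌ = α × α`, is a multiplicative `n`-Hom Lie superalgebra. -/
theorem check_is_mnhls {𝔽 : Type*} [Field 𝔽] [CharZero 𝔽]
    {N : Type*} [AddCommGroup N] [Module 𝔽 N] {m : ℕ} (hm : 1 ≤ m)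
    (gr : ZMod 2 → Submodule 𝔽 N) (br : MultilinearMap 𝔽 (fun _ : Fin (m + 1) => N) N)
    (α : N →ₗ[𝔽] N) (H : IsMNHLS gr br α) :
    IsMNHLS (checkGr gr) (checkBr br) (α.prodMap α) :=
  check_is_mnhls_general gr br α H
end
end

section
/- Let N be a multiplicative n-Hom Lie superalgebra, Ň = Nt + Nt^n the associated multiplicative n-Hom Lie superalgebra, U a graded complement with N = U ⊕ [N,…,N], and φ : QDer(N) → End(Ň) defined by φ(D)(at + ut^n + bt^n) = D(a)t + D'(b)t^n for a ∈ N, u ∈ U, b ∈ [N,…,N], where D' is a map associated to the quasiderivation D. Then φ is an even injective map, and φ(D) does not depend on the choice of D' (i.e. on [N,…,N] the associated map D' is uniquely determined by D). -/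
open scoped BigOperators

noncomputable section

variable {𝔽 : Type*} [Field 𝔽]
variable {N : Type*} [AddCommGroup N] [Module 𝔽 N]

/-- Proposition 4.2(1)(2): the map `φ : QDer(N) → End(Ň)`,
`φ(D)(at + utⁿ + btⁿ) = D(a)t + D'(b)tⁿ` (where `π` is the even projection of `N` onto
`[N, …, N]` along the graded complement `U`), is even (`|φ| = 0`), injective, and
`φ(D)` does not depend on the choice of the associated map `D'`. -/
theorem phi_even_injective_welldefined {𝔽 : Type*} [Field 𝔽] [CharZero 𝔽]
    {N : Type*} [AddCommGroup N] [Module 𝔽 N] {m : ℕ} (hm : 1 ≤ m)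
    (gr : ZMod 2 → Submodule 𝔽 N) (br : MultilinearMap 𝔽 (fun _ : Fin (m + 1) => N) N)
    (α : N →ₗ[𝔽] N) (H : IsMNHLS gr br α)
    (π : N →ₗ[𝔽] N) (hπmem : ∀ x : N, π x ∈ brSub br)
    (hπid : ∀ x ∈ brSub br, π x = x)
    (hπeven : ∀ g : ZMod 2, ∀ x ∈ gr g, π x ∈ gr g) :
    (∀ (k : ℕ) (ξ : ZMod 2) (D D' : N →ₗ[𝔽] N), IsQDerWith gr br α k ξ D D' →
      Homog (checkGr gr) ξ (phiMap D D' π)) ∧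
    (∀ (k₁ k₂ : ℕ) (ξ₁ ξ₂ : ZMod 2) (D₁ D₁' D₂ D₂' : N →ₗ[𝔽] N),
      IsQDerWith gr br α k₁ ξ₁ D₁ D₁' → IsQDerWith gr br α k₂ ξ₂ D₂ D₂' →
      phiMap D₁ D₁' π = phiMap D₂ D₂' π → D₁ = D₂) ∧
    (∀ (k : ℕ) (ξ : ZMod 2) (D D' D'' : N →ₗ[𝔽] N),
      IsQDerWith gr br α k ξ D D' → IsQDerWith gr br α k ξ D D'' →
      phiMap D D' π = phiMap D D'' π) := by
  refine ⟨?_, ?_, ?_⟩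
  · rintro k ξ D D' ⟨hD, _, hD', _, _⟩ g x hx
    exact ⟨hD g x.1 hx.1, hD' g _ (hπeven g x.2 hx.2)⟩
  · intro k₁ k₂ ξ₁ ξ₂ D₁ D₁' D₂ D₂' _ _ h
    ext x
    have := congrArg (fun f : N × N →ₗ[𝔽] N × N => (f (x, 0)).1) h
    simpa [phiMap] using this
  · intro k ξ D D' D'' h1 h2
    have hdec : ∀ y : N, ∃ c : ZMod 2 → N, (∀ g, c g ∈ gr g) ∧ y = ∑ g, c g := by
      intro y
      have htop := H.internal.submodule_iSup_eq_top
      have hy : y ∈ ⨆ g, gr g := htop ▸ Submodule.mem_top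
      rw [Submodule.mem_iSup_iff_exists_finsupp] at hy
      obtain ⟨f, hf, hsum⟩ := hy
      refine ⟨fun g => f g, hf, ?_⟩
      rw [← hsum, Finsupp.sum_fintype]
      intro; rfl
    have hbr : ∀ x : Fin (m + 1) → N, D' (br x) = D'' (br x) := by
      intro x
      choose c hc hxc using fun i => hdec (x i)
      have hx : br x = ∑ f : Fin (m + 1) → ZMod 2, br fun i => c i (f i) := by
        conv_lhs => rw [show x = fun i => ∑ g, c i g from funext hxc]
        exact br.map_sum c
      rw [hx, map_sum, map_sum]
      refine Finset.sum_congr rfl fun f _ => ?_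
      rw [← h1.2.2.2.2 f (fun i => c i (f i)) (fun i => hc i (f i)),
        ← h2.2.2.2.2 f (fun i => c i (f i)) (fun i => hc i (f i))]
    have hspan : ∀ y ∈ brSub br, D' y = D'' y := by
      intro y hy
      induction hy using Submodule.span_induction with
      | mem y hy => obtain ⟨x, rfl⟩ := hy; exact hbr x
      | zero => simp
      | add a b _ _ ha hb => simp [ha, hb]
      | smul r a _ ha => simp [ha]
    have hcomp : D' ∘ₗ π = D'' ∘ₗ π := by
      ext z; exact hspan _ (hπmem _)
    rw [phiMap, phiMap, hcomp]
end
end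

section
/- Let N be a multiplicative n-Hom Lie superalgebra, Ň the associated multiplicative n-Hom Lie superalgebra, and φ : QDer(N) → End(Ň) given by φ(D)(at + ut^n + bt^n) = D(a)t + D'(b)t^n. Then φ(QDer(N)) ⊆ Der(Ň): for every homogeneous α^k-quasiderivation D of N of degree ξ, the map φ(D) commutes with α̌ and satisfies φ(D)([z₁,…,zₙ]) = Σ_{i=1}^{n}(−1)^{ξ|Z_{i−1}|}[α̌^k(z₁),…,φ(D)(zᵢ),…,α̌^k(zₙ)] for all homogeneous z₁,…,zₙ ∈ Ň, i.e. φ(D) is an α̌^k-derivation of Ň. -/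
open scoped BigOperators

noncomputable section

variable {𝔽 : Type*} [Field 𝔽]
variable {N : Type*} [AddCommGroup N] [Module 𝔽 N]

/-- Proposition 4.2(3): `φ(QDer(N)) ⊆ Der(Ň)`: for every homogeneous
`α^k`-quasiderivation `D` of degree `ξ` with associated map `D'`, the map
`φ(D) = phiMap D D' π` is an `α̌^k`-derivation of `Ň` of degree `ξ`. -/
theorem phi_qder_subset_der {𝔽 : Type*} [Field 𝔽] [CharZero 𝔽]
    {N : Type*} [AddCommGroup N] [Module 𝔽 N] {m : ℕ} (hm : 1 ≤ m)
    (gr : ZMod 2 → Submodule 𝔽 N) (br : MultilinearMap 𝔽 (fun _ : Fin (m + 1) => N) N)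
    (α : N →ₗ[𝔽] N) (H : IsMNHLS gr br α)
    (π : N →ₗ[𝔽] N) (hπmem : ∀ x : N, π x ∈ brSub br)
    (hπid : ∀ x ∈ brSub br, π x = x)
    (hπeven : ∀ g : ZMod 2, ∀ x ∈ gr g, π x ∈ gr g)
    (hπα : π ∘ₗ α = α ∘ₗ π)
    (k : ℕ) (ξ : ZMod 2) (D D' : N →ₗ[𝔽] N) (hD : IsQDerWith gr br α k ξ D D') :
    IsDer (checkGr gr) (checkBr br) (α.prodMap α) k ξ (phiMap D D' π) := by
  obtain ⟨hH, hDα, hH', hD'α, hid⟩ := hD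
  have hpow : ∀ j : ℕ, (α.prodMap α) ^ j = (α ^ j).prodMap (α ^ j) := by
    intro j
    induction j with
    | zero => ext x <;> simp
    | succ n ih =>
        ext x <;> simp [pow_succ, ih, Module.End.mul_apply]
  have hπα' : ∀ b : N, π (α b) = α (π b) := fun b => LinearMap.congr_fun hπα b
  refine ⟨?_, ?_, ?_⟩
  · intro g x hx
    exact ⟨hH g x.1 hx.1, hH' g _ (hπeven g x.2 hx.2)⟩
  · apply LinearMap.ext
    intro x
    have h1 : D (α x.1) = α (D x.1) := LinearMap.congr_fun hDα x.1
    have h2 : D' (π (α x.2)) = α (D' (π x.2)) := by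
      rw [hπα' x.2]; exact LinearMap.congr_fun hD'α (π x.2)
    simp [phiMap, h1, h2]
  · intro d x hx
    have hx1 : ∀ i, (x i).1 ∈ gr (d i) := fun i => (hx i).1
    have key := hid d (fun i => (x i).1) hx1
    have hbrmem : br (fun i => (x i).1) ∈ brSub br :=
      Submodule.subset_span ⟨_, rfl⟩
    have hLHS : phiMap D D' π (checkBr br x) = (0, D' (br fun i => (x i).1)) := by
      simp [phiMap, checkBr, hπid _ hbrmem]
    rw [hLHS]
    have hterm : ∀ i : Fin (m + 1),
        checkBr br (Function.update (fun j => ((α.prodMap α) ^ k) (x j)) i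
          (phiMap D D' π (x i))) =
        (0, br (Function.update (fun j => (α ^ k) ((x j).1)) i (D ((x i).1)))) := by
      intro i
      have hfun : (fun j => (Function.update (fun j => ((α.prodMap α) ^ k) (x j)) i
          (phiMap D D' π (x i)) j).1) =
          Function.update (fun j => (α ^ k) ((x j).1)) i (D ((x i).1)) := by
        funext j
        by_cases hj : j = i
        · subst hj; simp [phiMap]
        · simp [Function.update_of_ne hj, hpow]
      simp only [checkBr, LinearMap.compMultilinearMap_apply,
        MultilinearMap.compLinearMap_apply, LinearMap.coe_inr]
      rw [show (fun j => LinearMap.fst 𝔽 N N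
          (Function.update (fun j => ((α.prodMap α) ^ k) (x j)) i
            (phiMap D D' π (x i)) j)) = Function.update
          (fun j => (α ^ k) ((x j).1)) i (D ((x i).1)) from hfun]
    simp only [hterm, Prod.smul_mk, smul_zero]
    rw [Prod.ext_iff]
    constructor
    · simp [Prod.fst_sum]
    · rw [Prod.snd_sum]; simpa using key.symm
end
end
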